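/- arXiv:2005.05609 — 3 statements merged into one kernel-verified Lean document; each statement's English description precedes it below -/
import Mathlib

section
/- Let 0 < α ≤ 1, let r > 1/α be a real number and r' := r/(r−1) its conjugate exponent (so that r'(α−1) + 1 > 0), and let R ≥ 0. Let u₁, u₂ ∈ L^∞([a,b],ℝⁿ) with ‖u₁‖_∞ ≤ R and ‖u₂‖_∞ ≤ R, and y₁, y₂ ∈ ℝⁿ. Setting x(t,u,y) := y + ∫_a^t ((t−s)^{α−1}/Γ(α)) u(s) ds, one has for every t ∈ [a,b]: ‖x(t,u₂,y₂) − x(t,u₁,y₁)‖ ≤ ‖y₂ − y₁‖ + (1/Γ(α)) ( 2R (b−a)^{r'(α−1)+1} / (r'(α−1)+1) )^{1/r'} ‖u₂ − u₁‖_{L¹}^{1/r}. -/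
/-!
Subtracting, the `y`-parts contribute `‖y₂ - y₁‖` and the rest is the Riemann–Liouville integral
of `u₂ - u₁`. Hölder's inequality with exponents `r' = r / (r - 1)` and `r` separates the kernel
`(t - s) ^ (α - 1)`, whose `r'`-th power is integrable because `r' (α - 1) + 1 > 0`, from
`g = ‖u₂ - u₁‖`. Since `0 ≤ g ≤ 2R`, `∫ g ^ r ≤ (2R) ^ (r - 1) ∫ g`, so the `L^r` norm of `g` is at
most `(2R) ^ (1 / r') ‖g‖_{L¹} ^ (1 / r)`.
-/

open MeasureTheory Set

theorem rpow_le_rpow_sub_one_mul_of_le {x M q : ℝ} (hx : 0 ≤ x) (hxM : x ≤ M) (hq : 1 ≤ q) :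
    x ^ q ≤ M ^ (q - 1) * x :=
  calc x ^ q = x ^ (q - 1) * x ^ (1 : ℝ) := by
        rw [← Real.rpow_add' hx (by linarith), sub_add_cancel]
    _ ≤ M ^ (q - 1) * x := by
        rw [Real.rpow_one]
        gcongr

section Interpolation

variable {X : Type*} [MeasurableSpace X] {μ : Measure X} {g : X → ℝ} {M : ℝ}

theorem integral_rpow_le_rpow_sub_one_mul_integral {q : ℝ} (hg : Integrable g μ)
    (hg0 : 0 ≤ᵐ[μ] g) (hgM : ∀ᵐ x ∂μ, g x ≤ M) (hq : 1 ≤ q) :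
    ∫ x, g x ^ q ∂μ ≤ M ^ (q - 1) * ∫ x, g x ∂μ := by
  rw [← integral_const_mul]
  refine integral_mono_of_nonneg ?_ (hg.const_mul _) ?_
  · filter_upwards [hg0] with x hx using Real.rpow_nonneg hx q
  · filter_upwards [hg0, hgM] with x hx hxM using rpow_le_rpow_sub_one_mul_of_le hx hxM hq

/-- Hölder's inequality, with the `L^q` norm of the bounded factor interpolated between `L¹` and
`L^∞`. -/
theorem integral_mul_le_of_holderConjugate_of_ae_le [IsFiniteMeasure μ] {p q : ℝ}
    (hpq : p.HolderConjugate q) {f : X → ℝ} (hf0 : 0 ≤ᵐ[μ] f) (hf : MemLp f (.ofReal p) μ)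
    (hg : AEStronglyMeasurable g μ) (hg0 : 0 ≤ᵐ[μ] g) (hgM : ∀ᵐ x ∂μ, g x ≤ M) (hM : 0 ≤ M) :
    ∫ x, f x * g x ∂μ ≤
      (∫ x, f x ^ p ∂μ) ^ (1 / p) * M ^ (1 / p) * (∫ x, g x ∂μ) ^ (1 / q) := by
  have hg_norm : ∀ᵐ x ∂μ, ‖g x‖ ≤ M := by
    filter_upwards [hg0, hgM] with x hx hxM
    rwa [Real.norm_of_nonneg hx]
  have hexp : (q - 1) * (1 / q) = 1 / p := by
    rw [sub_mul, one_mul, mul_one_div_cancel hpq.symm.ne_zero, one_div, one_div,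
      hpq.symm.one_sub_inv]
  calc ∫ x, f x * g x ∂μ
      ≤ (∫ x, f x ^ p ∂μ) ^ (1 / p) * (∫ x, g x ^ q ∂μ) ^ (1 / q) :=
        integral_mul_le_Lp_mul_Lq_of_nonneg hpq hf0 hg0 hf (.of_bound hg M hg_norm)
    _ ≤ (∫ x, f x ^ p ∂μ) ^ (1 / p) * (M ^ (q - 1) * ∫ x, g x ∂μ) ^ (1 / q) := by
        have hfp : 0 ≤ ∫ x, f x ^ p ∂μ :=
          integral_nonneg_of_ae (by filter_upwards [hf0] with x hx using Real.rpow_nonneg hx p)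
        have hgq : 0 ≤ ∫ x, g x ^ q ∂μ :=
          integral_nonneg_of_ae (by filter_upwards [hg0] with x hx using Real.rpow_nonneg hx q)
        refine mul_le_mul_of_nonneg_left (Real.rpow_le_rpow hgq ?_ hpq.symm.one_div_nonneg)
          (Real.rpow_nonneg hfp _)
        exact integral_rpow_le_rpow_sub_one_mul_integral (.of_bound hg M hg_norm) hg0 hgM
          hpq.symm.lt.le
    _ = (∫ x, f x ^ p ∂μ) ^ (1 / p) * M ^ (1 / p) * (∫ x, g x ∂μ) ^ (1 / q) := by
        rw [Real.mul_rpow (by positivity) (integral_nonneg_of_ae hg0), ← Real.rpow_mul hM, hexp,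
          mul_assoc]

end Interpolation

section Kernel

variable {a t e : ℝ}

theorem intervalIntegrable_sub_rpow (he : -1 < e) :
    IntervalIntegrable (fun s => (t - s) ^ e) volume a t := by
  simpa using (intervalIntegral.intervalIntegrable_rpow' (a := t - a) (b := 0) he).comp_sub_left t

theorem integral_sub_rpow (he : -1 < e) :
    ∫ s in a..t, (t - s) ^ e = (t - a) ^ (e + 1) / (e + 1) := by
  rw [intervalIntegral.integral_comp_sub_left (fun x => x ^ e) t, sub_self,
    integral_rpow (Or.inl he), Real.zero_rpow (by linarith), sub_zero]

theorem sub_rpow_rpow_ae_eq (p : ℝ) :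
    (fun s => ((t - s) ^ e) ^ p) =ᵐ[volume.restrict (Ioc a t)] fun s => (t - s) ^ (p * e) := by
  filter_upwards [ae_restrict_mem measurableSet_Ioc] with s hs
  rw [← Real.rpow_mul (sub_nonneg.2 hs.2), mul_comm]

theorem memLp_sub_rpow {p : ℝ} (hp : 0 < p) (hat : a ≤ t) (he : -1 < p * e) :
    MemLp (fun s => (t - s) ^ e) (.ofReal p) (volume.restrict (Ioc a t)) := by
  have hmeas : AEStronglyMeasurable (fun s => (t - s) ^ e) (volume.restrict (Ioc a t)) :=
    (by fun_prop : Measurable fun s : ℝ => (t - s) ^ e).aestronglyMeasurable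
  rw [← integrable_norm_rpow_iff hmeas (by simpa using hp) ENNReal.ofReal_ne_top,
    ENNReal.toReal_ofReal hp.le]
  refine ((intervalIntegrable_iff_integrableOn_Ioc_of_le hat).1
    (intervalIntegrable_sub_rpow he)).congr ?_
  filter_upwards [sub_rpow_rpow_ae_eq (a := a) (t := t) (e := e) p,
    ae_restrict_mem measurableSet_Ioc] with s hs hmem
  rw [Real.norm_of_nonneg (Real.rpow_nonneg (sub_nonneg.2 hmem.2) e), hs]

theorem integral_sub_rpow_mul_le {p q M : ℝ} {g : ℝ → ℝ} (hat : a ≤ t)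
    (hpq : p.HolderConjugate q) (he : -1 < p * e)
    (hg : AEStronglyMeasurable g (volume.restrict (Ioc a t)))
    (hg0 : ∀ᵐ s ∂volume.restrict (Ioc a t), 0 ≤ g s)
    (hgM : ∀ᵐ s ∂volume.restrict (Ioc a t), g s ≤ M) (hM : 0 ≤ M) :
    ∫ s in a..t, (t - s) ^ e * g s ≤
      ((t - a) ^ (p * e + 1) / (p * e + 1)) ^ (1 / p) * M ^ (1 / p) *
        (∫ s in a..t, g s) ^ (1 / q) := by
  have hf0 : ∀ᵐ s ∂volume.restrict (Ioc a t), 0 ≤ (t - s) ^ e := by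
    filter_upwards [ae_restrict_mem measurableSet_Ioc] with s hs
    exact Real.rpow_nonneg (sub_nonneg.2 hs.2) e
  have hfp : ∫ s in Ioc a t, ((t - s) ^ e) ^ p = (t - a) ^ (p * e + 1) / (p * e + 1) := by
    rw [integral_congr_ae (sub_rpow_rpow_ae_eq p), ← intervalIntegral.integral_of_le hat,
      integral_sub_rpow he]
  simp only [intervalIntegral.integral_of_le hat]
  rw [← hfp]
  exact integral_mul_le_of_holderConjugate_of_ae_le hpq hf0 (memLp_sub_rpow hpq.pos hat he)
    hg hg0 hgM hM

end Kernel

section RiemannLiouville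

variable {E : Type*} [NormedAddCommGroup E] [NormedSpace ℝ E] {α a t : ℝ}

noncomputable def riemannLiouvilleIntegral (α a : ℝ) (u : ℝ → E) (t : ℝ) : E :=
  ∫ s in a..t, ((t - s) ^ (α - 1) / Real.Gamma α) • u s

theorem intervalIntegrable_riemannLiouville_integrand {u : ℝ → E} {M : ℝ} (hα : 0 < α)
    (hat : a ≤ t) (hu : AEStronglyMeasurable u (volume.restrict (Ioc a t)))
    (huM : ∀ᵐ s ∂volume.restrict (Ioc a t), ‖u s‖ ≤ M) :
    IntervalIntegrable (fun s => ((t - s) ^ (α - 1) / Real.Gamma α) • u s) volume a t := by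
  rw [intervalIntegrable_iff_integrableOn_Ioc_of_le hat]
  have hkernel := (intervalIntegrable_sub_rpow (a := a) (t := t) (e := α - 1)
    (by linarith)).div_const (Real.Gamma α)
  rw [intervalIntegrable_iff_integrableOn_Ioc_of_le hat] at hkernel
  exact hkernel.smul_bdd M hu huM

theorem riemannLiouvilleIntegral_sub {u v : ℝ → E}
    (hu : IntervalIntegrable (fun s => ((t - s) ^ (α - 1) / Real.Gamma α) • u s) volume a t)
    (hv : IntervalIntegrable (fun s => ((t - s) ^ (α - 1) / Real.Gamma α) • v s) volume a t) :
    riemannLiouvilleIntegral α a u t - riemannLiouvilleIntegral α a v t =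
      riemannLiouvilleIntegral α a (u - v) t := by
  simp only [riemannLiouvilleIntegral, ← intervalIntegral.integral_sub hu hv, Pi.sub_apply,
    smul_sub]

theorem norm_riemannLiouvilleIntegral_le (u : ℝ → E) (hα : 0 < α) (hat : a ≤ t) :
    ‖riemannLiouvilleIntegral α a u t‖ ≤
      1 / Real.Gamma α * ∫ s in a..t, (t - s) ^ (α - 1) * ‖u s‖ := by
  have hΓ := Real.Gamma_pos_of_pos hα
  rw [← intervalIntegral.integral_const_mul]
  refine (intervalIntegral.norm_integral_le_integral_norm hat).trans_eq
    (intervalIntegral.integral_congr fun s hs => ?_)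
  have hts : 0 ≤ t - s := sub_nonneg.2 (uIcc_of_le hat ▸ hs).2
  simp only [norm_smul, Real.norm_of_nonneg (div_nonneg (Real.rpow_nonneg hts _) hΓ.le)]
  ring

theorem norm_riemannLiouvilleIntegral_le_of_ae_norm_le {u : ℝ → E} {p q M b : ℝ} (hα : 0 < α)
    (hpq : p.HolderConjugate q) (hαp : -1 < p * (α - 1)) (hat : a ≤ t) (htb : t ≤ b)
    (hu : AEStronglyMeasurable u (volume.restrict (Ioc a b)))
    (huM : ∀ᵐ s ∂volume.restrict (Ioc a b), ‖u s‖ ≤ M) (hM : 0 ≤ M) :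
    ‖riemannLiouvilleIntegral α a u t‖ ≤
      1 / Real.Gamma α * (M * (b - a) ^ (p * (α - 1) + 1) / (p * (α - 1) + 1)) ^ (1 / p) *
        (∫ s in a..b, ‖u s‖) ^ (1 / q) := by
  have hsub : Ioc a t ⊆ Ioc a b := Ioc_subset_Ioc_right htb
  have hβ : 0 < p * (α - 1) + 1 := by linarith
  have hJ : ∫ s in a..t, ‖u s‖ ≤ ∫ s in a..b, ‖u s‖ :=
    intervalIntegral.integral_mono_interval le_rfl hat htb
      (ae_of_all _ fun s => norm_nonneg _)
      ((intervalIntegrable_iff_integrableOn_Ioc_of_le (hat.trans htb)).2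
        (Integrable.of_bound hu.norm M (by simpa using huM)))
  calc ‖riemannLiouvilleIntegral α a u t‖
      ≤ 1 / Real.Gamma α * ∫ s in a..t, (t - s) ^ (α - 1) * ‖u s‖ :=
        norm_riemannLiouvilleIntegral_le u hα hat
    _ ≤ 1 / Real.Gamma α * (((t - a) ^ (p * (α - 1) + 1) / (p * (α - 1) + 1)) ^ (1 / p) *
          M ^ (1 / p) * (∫ s in a..t, ‖u s‖) ^ (1 / q)) := by
        gcongr
        exact integral_sub_rpow_mul_le hat hpq hαp
          (hu.mono_measure (Measure.restrict_mono hsub le_rfl)).norm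
          (ae_of_all _ fun s => norm_nonneg _) (ae_restrict_of_ae_restrict_of_subset hsub huM) hM
    _ ≤ 1 / Real.Gamma α * (((b - a) ^ (p * (α - 1) + 1) / (p * (α - 1) + 1)) ^ (1 / p) *
          M ^ (1 / p) * (∫ s in a..b, ‖u s‖) ^ (1 / q)) := by
        have hJt : 0 ≤ ∫ s in a..t, ‖u s‖ :=
          intervalIntegral.integral_nonneg hat fun s _ => norm_nonneg _
        have hba : 0 ≤ b - a := by linarith
        gcongr
        exacts [hpq.one_div_nonneg, hpq.symm.one_div_nonneg]
    _ = 1 / Real.Gamma α * (M * (b - a) ^ (p * (α - 1) + 1) / (p * (α - 1) + 1)) ^ (1 / p) *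
          (∫ s in a..b, ‖u s‖) ^ (1 / q) := by
        rw [← Real.mul_rpow (by have := hat.trans htb; positivity) hM]
        ring_nf

end RiemannLiouville

theorem stmt_15_general (n : ℕ) (a b : ℝ)
    (α : ℝ) (hα0 : 0 < α) (hα1 : α ≤ 1)
    (r : ℝ) (hr : 1 / α < r) (R : ℝ) (hR : 0 ≤ R)
    (u₁ u₂ : ℝ → EuclideanSpace ℝ (Fin n)) (hm₁ : Measurable u₁) (hm₂ : Measurable u₂)
    (hb₁ : ∀ᵐ s ∂(volume : Measure ℝ), s ∈ Icc a b → ‖u₁ s‖ ≤ R)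
    (hb₂ : ∀ᵐ s ∂(volume : Measure ℝ), s ∈ Icc a b → ‖u₂ s‖ ≤ R)
    (y₁ y₂ : EuclideanSpace ℝ (Fin n)) :
    ∀ t ∈ Icc a b,
      ‖(y₂ + ∫ s in a..t, ((t - s) ^ (α - 1) / Real.Gamma α) • u₂ s)
          - (y₁ + ∫ s in a..t, ((t - s) ^ (α - 1) / Real.Gamma α) • u₁ s)‖
        ≤ ‖y₂ - y₁‖ + (1 / Real.Gamma α) *
            (2 * R * (b - a) ^ ((r / (r - 1)) * (α - 1) + 1) /
              ((r / (r - 1)) * (α - 1) + 1)) ^ (1 / (r / (r - 1))) *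
            (∫ s in a..b, ‖u₂ s - u₁ s‖) ^ (1 / r) := by
  rintro t ⟨hat, htb⟩
  have hr1 : 1 < r := (one_le_one_div hα0 hα1).trans_lt hr
  have hpq : (r / (r - 1)).HolderConjugate r := (Real.HolderConjugate.conjExponent hr1).symm
  -- `r' (α - 1) + 1 = (r α - 1) / (r - 1)` and `r α > 1`
  have hαp : -1 < r / (r - 1) * (α - 1) := by
    have hrα : 1 < r * α := by rwa [div_lt_iff₀ hα0] at hr
    rw [div_mul_eq_mul_div, lt_div_iff₀ (by linarith)]
    nlinarith
  have hbound : ∀ u : ℝ → EuclideanSpace ℝ (Fin n), (∀ᵐ s, s ∈ Icc a b → ‖u s‖ ≤ R) →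
      ∀ᵐ s ∂volume.restrict (Ioc a b), ‖u s‖ ≤ R := fun u hu =>
    ae_restrict_of_ae_restrict_of_subset Ioc_subset_Icc_self
      ((ae_restrict_iff' measurableSet_Icc).2 hu)
  have hint : ∀ u : ℝ → EuclideanSpace ℝ (Fin n), Measurable u →
      (∀ᵐ s, s ∈ Icc a b → ‖u s‖ ≤ R) →
      IntervalIntegrable (fun s => ((t - s) ^ (α - 1) / Real.Gamma α) • u s) volume a t :=
    fun u hu hub => intervalIntegrable_riemannLiouville_integrand hα0 hat hu.aestronglyMeasurable
      (ae_restrict_of_ae_restrict_of_subset (Ioc_subset_Ioc_right htb) (hbound u hub))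
  have hdiff : ∀ᵐ s ∂volume.restrict (Ioc a b), ‖(u₂ - u₁) s‖ ≤ 2 * R := by
    filter_upwards [hbound u₂ hb₂, hbound u₁ hb₁] with s h₂ h₁
    rw [Pi.sub_apply]
    linarith [norm_sub_le (u₂ s) (u₁ s)]
  calc _ = ‖(y₂ - y₁) + riemannLiouvilleIntegral α a (u₂ - u₁) t‖ := by
        rw [add_sub_add_comm, ← riemannLiouvilleIntegral_sub (hint u₂ hm₂ hb₂) (hint u₁ hm₁ hb₁)]
        rfl
    _ ≤ ‖y₂ - y₁‖ + ‖riemannLiouvilleIntegral α a (u₂ - u₁) t‖ := norm_add_le _ _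
    _ ≤ _ := by
        gcongr
        exact norm_riemannLiouvilleIntegral_le_of_ae_norm_le hα0 hpq hαp hat htb
          (hm₂.sub hm₁).aestronglyMeasurable hdiff (by positivity)

theorem stmt_15 (n : ℕ) (hn : 1 ≤ n) (a b : ℝ) (hab : a < b)
    (α : ℝ) (hα0 : 0 < α) (hα1 : α ≤ 1)
    (r : ℝ) (hr : 1 / α < r) (R : ℝ) (hR : 0 ≤ R)
    (u₁ u₂ : ℝ → EuclideanSpace ℝ (Fin n)) (hm₁ : Measurable u₁) (hm₂ : Measurable u₂)
    (hb₁ : ∀ᵐ s ∂(volume : Measure ℝ), s ∈ Icc a b → ‖u₁ s‖ ≤ R)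
    (hb₂ : ∀ᵐ s ∂(volume : Measure ℝ), s ∈ Icc a b → ‖u₂ s‖ ≤ R)
    (y₁ y₂ : EuclideanSpace ℝ (Fin n)) :
    ∀ t ∈ Icc a b,
      ‖(y₂ + ∫ s in a..t, ((t - s) ^ (α - 1) / Real.Gamma α) • u₂ s)
          - (y₁ + ∫ s in a..t, ((t - s) ^ (α - 1) / Real.Gamma α) • u₁ s)‖
        ≤ ‖y₂ - y₁‖ + (1 / Real.Gamma α) *
            (2 * R * (b - a) ^ ((r / (r - 1)) * (α - 1) + 1) /
              ((r / (r - 1)) * (α - 1) + 1)) ^ (1 / (r / (r - 1))) *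
            (∫ s in a..b, ‖u₂ s - u₁ s‖) ^ (1 / r) :=
  stmt_15_general n a b α hα0 hα1 r hr R hR u₁ u₂ hm₁ hm₂ hb₁ hb₂ y₁ y₂
end

section
/- (Needle-perturbation estimates.) Let 0 < α ≤ 1 and R ≥ 0. Let u : [a,b] → ℝⁿ be measurable with ‖u(s)‖ ≤ R for almost every s, let y ∈ ℝⁿ, τ ∈ (a,b), v ∈ ℝⁿ with ‖v‖ ≤ R, and 0 < h ≤ b − τ. Define u_h := v on [τ, τ+h) and u_h := u elsewhere on [a,b], and set x(t) := y + ∫_a^t ((t−s)^{α−1}/Γ(α)) u(s) ds and x_h(t) := y + ∫_a^t ((t−s)^{α−1}/Γ(α)) u_h(s) ds. Then: (a) ‖x_h(t) − x(t)‖ ≤ (2R/Γ(α+1)) h^α for all t ∈ [a,b]; (b) for every t ∈ (τ+h, b], ‖ (x_h(t) − x(t))/h − ((t−τ)^{α−1}/Γ(α)) (v − u(τ)) ‖ ≤ ((t−τ)^{α−1}/Γ(α)) ‖ (1/h)∫_τ^{τ+h} u(s) ds − u(τ) ‖ + (2R/Γ(α)) ( (t−(τ+h))^{α−1} − (t−τ)^{α−1}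 ). -/
/-!
The two controls differ only on the needle `[τ, τ + h)`, so
`x_h(t) - x(t) = ∫_{(a,t] ∩ [τ,τ+h)} k_t(s) (v - u(s)) ds` with `k_t(s) = (t - s)^(α-1) / Γ(α)`
and `‖v - u(s)‖ ≤ 2R`.  For (a), the integral of `k_t` over a subinterval of `[τ, t]` of length
at most `h` is at most `h^α / Γ(α + 1)`, by subadditivity of `r ↦ r^α`.  For (b), since `α ≤ 1`
the kernel is nondecreasing in `s`, so on the needle it lies between `k_t(τ)` and `k_t(τ + h)`;
freezing it at `k_t(τ)` costs at most `2R (k_t(τ + h) - k_t(τ))` on average, and what remains is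
`k_t(τ)` times the error of the mean of `u` over the needle.
-/

open MeasureTheory Set
open scoped ENNReal

theorem Real.rpow_sub_rpow_le_sub_rpow {x y p : ℝ} (hy : 0 ≤ y) (hyx : y ≤ x) (hp0 : 0 ≤ p)
    (hp1 : p ≤ 1) : x ^ p - y ^ p ≤ (x - y) ^ p := by
  have := Real.rpow_add_le_add_rpow hy (sub_nonneg.2 hyx) hp0 hp1
  rw [add_sub_cancel] at this
  linarith

section Kernel

variable {α : ℝ}

theorem integrableOn_Icc_sub_rpow (hα : 0 < α) {c t : ℝ} (hct : c ≤ t) :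
    IntegrableOn (fun s => (t - s) ^ (α - 1)) (Icc c t) := by
  have h := (intervalIntegral.intervalIntegrable_rpow' (r := α - 1) (a := 0) (b := t - c)
    (by linarith)).comp_sub_left t
  rw [sub_zero, sub_sub_cancel] at h
  exact (intervalIntegrable_iff_integrableOn_Icc_of_le hct).1 h.symm

theorem integral_sub_rpow_s16 (hα : 0 < α) (c d t : ℝ) :
    ∫ s in c..d, (t - s) ^ (α - 1) = ((t - c) ^ α - (t - d) ^ α) / α := by
  rw [intervalIntegral.integral_comp_sub_left (fun s => s ^ (α - 1)) t,
    integral_rpow (Or.inl (by linarith)), sub_add_cancel]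

theorem integral_Icc_sub_rpow_le (hα0 : 0 < α) (hα1 : α ≤ 1) {τ t h : ℝ} (hτt : τ ≤ t)
    (hh : 0 ≤ h) : ∫ s in Icc τ (min t (τ + h)), (t - s) ^ (α - 1) ≤ h ^ α / α := by
  set m := min t (τ + h)
  have hτm : τ ≤ m := le_min hτt (by linarith)
  have hmt : m ≤ t := min_le_left _ _
  rw [integral_Icc_eq_integral_Ioc, ← intervalIntegral.integral_of_le hτm, integral_sub_rpow_s16 hα0]
  gcongr
  calc (t - τ) ^ α - (t - m) ^ α ≤ (t - τ - (t - m)) ^ α :=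
        Real.rpow_sub_rpow_le_sub_rpow (by linarith) (by linarith) hα0.le hα1
    _ ≤ h ^ α := Real.rpow_le_rpow (by linarith) (by linarith [min_le_right t (τ + h)]) hα0.le

theorem sub_rpow_div_le_sub_rpow_div (hα1 : α ≤ 1) {s s' t γ : ℝ} (hγ : 0 ≤ γ) (hss' : s ≤ s')
    (hs't : s' < t) : (t - s) ^ (α - 1) / γ ≤ (t - s') ^ (α - 1) / γ :=
  div_le_div_of_nonneg_right
    (Real.rpow_le_rpow_of_nonpos (by linarith) (by linarith) (by linarith)) hγ

variable {E : Type*} [NormedAddCommGroup E] [NormedSpace ℝ E]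

theorem integrableOn_Ioc_sub_rpow_div_smul (hα : 0 < α) {c t : ℝ} (hct : c ≤ t) (γ : ℝ)
    {w : ℝ → E} {C : ℝ} (hw : AEStronglyMeasurable w (volume.restrict (Ioc c t)))
    (hwC : ∀ᵐ s ∂volume, s ∈ Ioc c t → ‖w s‖ ≤ C) :
    IntegrableOn (fun s => ((t - s) ^ (α - 1) / γ) • w s) (Ioc c t) :=
  (((integrableOn_Icc_sub_rpow hα hct).mono_set Ioc_subset_Icc_self).div_const γ).smul_bdd C hw
    ((ae_restrict_iff' measurableSet_Ioc).2 hwC)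

theorem norm_setIntegral_Ioc_inter_Ico_sub_rpow_div_smul_le (hα0 : 0 < α) (hα1 : α ≤ 1)
    {a t τ h γ C : ℝ} (hh : 0 ≤ h) (hγ : 0 < γ) (hC : 0 ≤ C) {w : ℝ → E}
    (hwC : ∀ᵐ s ∂volume, s ∈ Ioc a t ∩ Ico τ (τ + h) → ‖w s‖ ≤ C) :
    ‖∫ s in Ioc a t ∩ Ico τ (τ + h), ((t - s) ^ (α - 1) / γ) • w s‖ ≤ C / γ * (h ^ α / α) := by
  rcases lt_or_ge t τ with htτ | hτt
  · have hempty : Ioc a t ∩ Ico τ (τ + h) = ∅ :=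
      eq_empty_of_forall_notMem fun s hs => (hs.1.2.trans_lt htτ).not_ge hs.2.1
    rw [hempty, Measure.restrict_empty, integral_zero_measure, norm_zero]
    positivity
  set S := Ioc a t ∩ Ico τ (τ + h)
  set m := min t (τ + h)
  have hSm : S ⊆ Icc τ m := fun s hs => ⟨hs.2.1, le_min hs.1.2 hs.2.2.le⟩
  have hint : IntegrableOn (fun s => (t - s) ^ (α - 1) * (C / γ)) (Icc τ m) :=
    ((integrableOn_Icc_sub_rpow hα0 hτt).mono_set
      (Icc_subset_Icc_right (min_le_left _ _))).mul_const _
  have hbound : ∀ᵐ s ∂volume.restrict S, ‖((t - s) ^ (α - 1) / γ) • w s‖ ≤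
      (t - s) ^ (α - 1) * (C / γ) := by
    filter_upwards [ae_restrict_mem (measurableSet_Ioc.inter measurableSet_Ico),
      ae_restrict_of_ae hwC] with s hs hws
    have hk : 0 ≤ (t - s) ^ (α - 1) := Real.rpow_nonneg (by linarith [hs.1.2]) _
    rw [norm_smul, Real.norm_of_nonneg (by positivity), div_mul_eq_mul_div,
      mul_div_assoc']
    exact div_le_div_of_nonneg_right (mul_le_mul_of_nonneg_left (hws hs) hk) hγ.le
  calc ‖∫ s in S, ((t - s) ^ (α - 1) / γ) • w s‖
      ≤ ∫ s in S, (t - s) ^ (α - 1) * (C / γ) :=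
        norm_integral_le_of_norm_le (hint.mono_set hSm) hbound
    _ ≤ ∫ s in Icc τ m, (t - s) ^ (α - 1) * (C / γ) := by
      refine setIntegral_mono_set hint ?_ hSm.eventuallyLE
      filter_upwards [ae_restrict_mem measurableSet_Icc] with s hs
      have : 0 ≤ (t - s) ^ (α - 1) := Real.rpow_nonneg (by linarith [hs.2, min_le_left t (τ + h)]) _
      positivity
    _ = (∫ s in Icc τ m, (t - s) ^ (α - 1)) * (C / γ) := integral_mul_const _ _
    _ ≤ h ^ α / α * (C / γ) := by gcongr; exact integral_Icc_sub_rpow_le hα0 hα1 hτt hh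
    _ = C / γ * (h ^ α / α) := mul_comm _ _

end Kernel

section Needle

variable {E : Type*} [NormedAddCommGroup E] [NormedSpace ℝ E]

theorem intervalIntegral_smul_needle_sub {k : ℝ → ℝ} {u : ℝ → E} {v : E} {a t τ h : ℝ}
    (hat : a ≤ t) (hu : IntegrableOn (fun s => k s • u s) (Ioc a t))
    (huh : IntegrableOn (fun s => k s • if τ ≤ s ∧ s < τ + h then v else u s) (Ioc a t)) :
    (∫ s in a..t, k s • if τ ≤ s ∧ s < τ + h then v else u s) - ∫ s in a..t, k s • u s =
      ∫ s in Ioc a t ∩ Ico τ (τ + h), k s • (v - u s) := by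
  rw [intervalIntegral.integral_of_le hat, intervalIntegral.integral_of_le hat,
    ← integral_sub huh hu, ← setIntegral_indicator measurableSet_Ico]
  refine setIntegral_congr_fun measurableSet_Ioc fun s _ => ?_
  by_cases hs : τ ≤ s ∧ s < τ + h
  · rw [if_pos hs, indicator_of_mem (show s ∈ Ico τ (τ + h) from hs), smul_sub]
  · rw [if_neg hs, indicator_of_notMem (show s ∉ Ico τ (τ + h) from hs), sub_self]

theorem norm_setAverage_smul_sub_le [CompleteSpace E] {X : Type*} [MeasurableSpace X]
    {μ : Measure X} {S : Set X}
    (hS0 : μ S ≠ 0) (hS : μ S ≠ ∞) {k : X → ℝ} {K K' : ℝ} (hK : 0 ≤ K)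
    (hk : ∀ x ∈ S, K ≤ k x ∧ k x ≤ K') {u : X → E} {v : E} {C : ℝ}
    (hvu : ∀ᵐ x ∂μ, x ∈ S → ‖v - u x‖ ≤ C) (hu : IntegrableOn u S μ)
    (hku : IntegrableOn (fun x => k x • (v - u x)) S μ) (z : E) :
    ‖(⨍ x in S, k x • (v - u x) ∂μ) - K • (v - z)‖ ≤
      K * ‖(⨍ x in S, u x ∂μ) - z‖ + (K' - K) * C := by
  set m := μ.real S
  have hm : 0 < m := ENNReal.toReal_pos hS0 hS
  set I := ∫ x in S, (k x - K) • (v - u x) ∂μ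
  set U := ∫ x in S, u x ∂μ
  have hsplit : ∫ x in S, k x • (v - u x) ∂μ = I + K • (m • v - U) := by
    have hv_int : IntegrableOn (fun _ => v) S μ := integrableOn_const hS
    have hvu_int : IntegrableOn (fun x => v - u x) S μ := hv_int.sub hu
    simp only [I, U, sub_smul]
    rw [integral_sub hku (g := fun x => K • (v - u x)) (hvu_int.smul K), integral_smul,
      integral_sub hv_int hu, setIntegral_const]
    abel
  have hI : ‖I‖ ≤ (K' - K) * C * m := by
    refine norm_setIntegral_le_of_norm_le_const_ae' hS.lt_top ?_
    filter_upwards [hvu] with x hx hxS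
    obtain ⟨hKk, hkK'⟩ := hk x hxS
    rw [norm_smul, Real.norm_of_nonneg (sub_nonneg.2 hKk)]
    exact mul_le_mul (by linarith) (hx hxS) (norm_nonneg _) (by linarith)
  rw [setAverage_eq, setAverage_eq, hsplit]
  calc ‖m⁻¹ • (I + K • (m • v - U)) - K • (v - z)‖ = ‖m⁻¹ • I - K • (m⁻¹ • U - z)‖ := by
        congr 1
        match_scalars <;> field_simp; ring
    _ ≤ ‖m⁻¹ • I‖ + ‖K • (m⁻¹ • U - z)‖ := norm_sub_le _ _
    _ = m⁻¹ * ‖I‖ + K * ‖m⁻¹ • U - z‖ := by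
        rw [norm_smul, norm_smul, Real.norm_of_nonneg (inv_nonneg.2 hm.le),
          Real.norm_of_nonneg hK]
    _ ≤ m⁻¹ * ((K' - K) * C * m) + K * ‖m⁻¹ • U - z‖ := by gcongr
    _ = K * ‖m⁻¹ • U - z‖ + (K' - K) * C := by field_simp; ring

theorem intervalIntegral_sub_rpow_div_smul_needle_sub {α : ℝ} (hα : 0 < α) {u : ℝ → E}
    (hu : StronglyMeasurable u) {v : E} {a t τ h γ R : ℝ} (hat : a ≤ t)
    (huR : ∀ᵐ s ∂volume, s ∈ Ioc a t → ‖u s‖ ≤ R) (hv : ‖v‖ ≤ R) :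
    (∫ s in a..t, ((t - s) ^ (α - 1) / γ) • if τ ≤ s ∧ s < τ + h then v else u s) -
        ∫ s in a..t, ((t - s) ^ (α - 1) / γ) • u s =
      ∫ s in Ioc a t ∩ Ico τ (τ + h), ((t - s) ^ (α - 1) / γ) • (v - u s) := by
  have hneedle : ∀ᵐ s ∂volume, s ∈ Ioc a t → ‖if τ ≤ s ∧ s < τ + h then v else u s‖ ≤ R := by
    filter_upwards [huR] with s hs hst
    split_ifs
    exacts [hv, hs hst]
  have hneedle_meas : StronglyMeasurable fun s => if τ ≤ s ∧ s < τ + h then v else u s :=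
    StronglyMeasurable.ite measurableSet_Ico stronglyMeasurable_const hu
  exact intervalIntegral_smul_needle_sub hat
    (integrableOn_Ioc_sub_rpow_div_smul hα hat γ hu.aestronglyMeasurable huR)
    (integrableOn_Ioc_sub_rpow_div_smul hα hat γ hneedle_meas.aestronglyMeasurable hneedle)

theorem norm_inv_smul_setIntegral_needle_sub_le [CompleteSpace E] {α : ℝ} (hα1 : α ≤ 1)
    {u : ℝ → E} (hu : StronglyMeasurable u) {v : E} {τ h t γ C : ℝ} (hh : 0 < h) (hτht : τ + h < t)
    (hγ : 0 < γ) (hvu : ∀ᵐ s ∂volume, s ∈ Ioc τ (τ + h) → ‖v - u s‖ ≤ C) :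
    ‖h⁻¹ • (∫ s in Ico τ (τ + h), ((t - s) ^ (α - 1) / γ) • (v - u s)) -
        ((t - τ) ^ (α - 1) / γ) • (v - u τ)‖ ≤
      (t - τ) ^ (α - 1) / γ * ‖h⁻¹ • (∫ s in τ..τ + h, u s) - u τ‖ +
        C / γ * ((t - (τ + h)) ^ (α - 1) - (t - τ) ^ (α - 1)) := by
  have hK : 0 ≤ (t - τ) ^ (α - 1) / γ := div_nonneg (Real.rpow_nonneg (by linarith) _) hγ.le
  have hk : ∀ s ∈ Ioc τ (τ + h), (t - τ) ^ (α - 1) / γ ≤ (t - s) ^ (α - 1) / γ ∧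
      (t - s) ^ (α - 1) / γ ≤ (t - (τ + h)) ^ (α - 1) / γ := fun s hs =>
    ⟨sub_rpow_div_le_sub_rpow_div hα1 hγ.le hs.1.le (by linarith [hs.2]),
      sub_rpow_div_le_sub_rpow_div hα1 hγ.le hs.2 hτht⟩
  have hvu_int : IntegrableOn (fun s => v - u s) (Ioc τ (τ + h)) :=
    Measure.integrableOn_of_bounded (by simp) (stronglyMeasurable_const.sub hu).aestronglyMeasurable
      ((ae_restrict_iff' measurableSet_Ioc).2 hvu)
  have hu_int : IntegrableOn u (Ioc τ (τ + h)) :=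
    ((integrableOn_const (C := v) (by simp)).sub hvu_int).congr_fun
      (fun s _ => sub_sub_cancel v (u s)) measurableSet_Ioc
  have hku_int : IntegrableOn (fun s => ((t - s) ^ (α - 1) / γ) • (v - u s)) (Ioc τ (τ + h)) :=
    hvu_int.bdd_smul _
      (by fun_prop : Measurable fun s => (t - s) ^ (α - 1) / γ).aestronglyMeasurable
      ((ae_restrict_iff' measurableSet_Ioc).2 (ae_of_all _ fun s hs =>
        (Real.norm_of_nonneg (hK.trans (hk s hs).1)).trans_le (hk s hs).2))
  have hmean : ∀ f : ℝ → E, h⁻¹ • ∫ s in Ioc τ (τ + h), f s = ⨍ s in Ioc τ (τ + h), f s :=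
    fun f => by rw [setAverage_eq, Real.volume_real_Ioc_of_le (by linarith), add_sub_cancel_left]
  rw [integral_Ico_eq_integral_Ioc, intervalIntegral.integral_of_le (by linarith), hmean, hmean]
  exact (norm_setAverage_smul_sub_le (by simp [hh]) (by simp) hK hk hvu hu_int hku_int
    (u τ)).trans_eq (by ring)

end Needle

theorem stmt_16_general (n : ℕ) (a b : ℝ)
    (α : ℝ) (hα0 : 0 < α) (hα1 : α ≤ 1) (R : ℝ) (hR : 0 ≤ R)
    (u : ℝ → EuclideanSpace ℝ (Fin n)) (hm : Measurable u)
    (hb : ∀ᵐ s ∂(volume : Measure ℝ), s ∈ Icc a b → ‖u s‖ ≤ R)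
    (y v : EuclideanSpace ℝ (Fin n)) (hv : ‖v‖ ≤ R)
    (τ : ℝ) (hτ : τ ∈ Ioo a b) (h : ℝ) (hh0 : 0 < h)
    (x xh : ℝ → EuclideanSpace ℝ (Fin n))
    (hx : ∀ t, x t = y + ∫ s in a..t, ((t - s) ^ (α - 1) / Real.Gamma α) • u s)
    (hxh : ∀ t, xh t = y + ∫ s in a..t, ((t - s) ^ (α - 1) / Real.Gamma α) •
        (if τ ≤ s ∧ s < τ + h then v else u s)) :
    (∀ t ∈ Icc a b, ‖xh t - x t‖ ≤ 2 * R / Real.Gamma (α + 1) * h ^ α) ∧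
      ∀ t ∈ Ioc (τ + h) b,
        ‖(h⁻¹ • (xh t - x t)) - ((t - τ) ^ (α - 1) / Real.Gamma α) • (v - u τ)‖ ≤
          ((t - τ) ^ (α - 1) / Real.Gamma α) * ‖(h⁻¹ • ∫ s in τ..(τ + h), u s) - u τ‖
            + (2 * R / Real.Gamma α) * ((t - (τ + h)) ^ (α - 1) - (t - τ) ^ (α - 1)) := by
  have hΓ : 0 < Real.Gamma α := Real.Gamma_pos_of_pos hα0
  have hvu_le : ∀ᵐ s ∂volume, s ∈ Icc a b → ‖v - u s‖ ≤ 2 * R := by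
    filter_upwards [hb] with s hs hsab
    linarith [norm_sub_le v (u s), hs hsab]
  have hdiff : ∀ t ∈ Icc a b, xh t - x t =
      ∫ s in Ioc a t ∩ Ico τ (τ + h), ((t - s) ^ (α - 1) / Real.Gamma α) • (v - u s) := by
    intro t ht
    rw [hx, hxh, add_sub_add_left_eq_sub]
    exact intervalIntegral_sub_rpow_div_smul_needle_sub hα0 hm.stronglyMeasurable ht.1
      (hb.mono fun s hs hs' => hs ⟨hs'.1.le, hs'.2.trans ht.2⟩) hv
  refine ⟨fun t ht => ?_, fun t ⟨hτht, htb⟩ => ?_⟩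
  · rw [hdiff t ht, Real.Gamma_add_one hα0.ne']
    refine (norm_setIntegral_Ioc_inter_Ico_sub_rpow_div_smul_le hα0 hα1 hh0.le hΓ (by positivity)
      (hvu_le.mono fun s hs hs' => hs ⟨hs'.1.1.le, hs'.1.2.trans ht.2⟩)).trans_eq ?_
    field_simp
  · have hneedle : Ico τ (τ + h) ⊆ Ioc a t := fun s hs =>
      ⟨by linarith [hτ.1, hs.1], by linarith [hs.2]⟩
    rw [hdiff t ⟨by linarith [hτ.1], htb⟩, inter_eq_self_of_subset_right hneedle]
    refine (norm_inv_smul_setIntegral_needle_sub_le hα1 hm.stronglyMeasurable hh0 hτht hΓ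
      (hvu_le.mono fun s hs hs' => hs ⟨by linarith [hτ.1, hs'.1], by linarith [hs'.2]⟩)).trans_eq ?_
    ring

theorem stmt_16 (n : ℕ) (hn : 1 ≤ n) (a b : ℝ) (hab : a < b)
    (α : ℝ) (hα0 : 0 < α) (hα1 : α ≤ 1) (R : ℝ) (hR : 0 ≤ R)
    (u : ℝ → EuclideanSpace ℝ (Fin n)) (hm : Measurable u)
    (hb : ∀ᵐ s ∂(volume : Measure ℝ), s ∈ Icc a b → ‖u s‖ ≤ R)
    (y v : EuclideanSpace ℝ (Fin n)) (hv : ‖v‖ ≤ R)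
    (τ : ℝ) (hτ : τ ∈ Ioo a b) (h : ℝ) (hh0 : 0 < h) (hhb : h ≤ b - τ)
    (x xh : ℝ → EuclideanSpace ℝ (Fin n))
    (hx : ∀ t, x t = y + ∫ s in a..t, ((t - s) ^ (α - 1) / Real.Gamma α) • u s)
    (hxh : ∀ t, xh t = y + ∫ s in a..t, ((t - s) ^ (α - 1) / Real.Gamma α) •
        (if τ ≤ s ∧ s < τ + h then v else u s)) :
    (∀ t ∈ Icc a b, ‖xh t - x t‖ ≤ 2 * R / Real.Gamma (α + 1) * h ^ α) ∧
      ∀ t ∈ Ioc (τ + h) b,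
        ‖(h⁻¹ • (xh t - x t)) - ((t - τ) ^ (α - 1) / Real.Gamma α) • (v - u τ)‖ ≤
          ((t - τ) ^ (α - 1) / Real.Gamma α) * ‖(h⁻¹ • ∫ s in τ..(τ + h), u s) - u τ‖
            + (2 * R / Real.Gamma α) * ((t - (τ + h)) ^ (α - 1) - (t - τ) ^ (α - 1)) :=
  stmt_16_general n a b α hα0 hα1 R hR u hm hb y v hv τ hτ h hh0 x xh hx hxh
end

section
/- (Nonexistence of minimizers for purely fractional Bolza problems with a genuinely final-point-dependent Mayer cost.) Let 0 < α < 1 and β > α, and let φ : ℝⁿ×ℝⁿ → ℝ and L : ℝⁿ×ℝⁿ×[a,b] → ℝ be of class C². For (u,y) ∈ L^∞([a,b],ℝⁿ)×ℝⁿ set x(t,u,y) := y + ∫_a^t ((t−s)^{α−1}/Γ(α)) u(s) ds and 𝓛(u,y) := φ(y, x(b,u,y)) + ∫_a^b ((b−s)^{β−1}/Γ(β)) L( x(s,u,y), u(s), s ) ds. If ∂₂φ(x₁,x₂) ≠ 0 for every (x₁,x₂) ∈ ℝⁿ×ℝⁿ, then there is no (u,y) ∈ L^∞([a,b],ℝⁿ)×ℝⁿ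 satisfying 𝓛(u,y) ≤ 𝓛(u',y') for all (u',y') ∈ L^∞([a,b],ℝⁿ)×ℝⁿ, i.e. the Bolza functional 𝓛 has no global minimizer. -/
/-!
Suppose `(u, y)` were a minimiser and let `g ≠ 0` be the gradient of `φ (y, ·)` at the endpoint
`x(b, u, y)`. Adding the constant `-g` to `u` on `(b - ε, b]` leaves the trajectory unchanged on
`[a, b - ε]` and moves its endpoint by `-(ε ^ α / Γ(α + 1)) • g`, which lowers the Mayer term by
about `‖g‖² ε ^ α / Γ(α + 1)`. The Lagrangian term only changes on `(b - ε, b]`, where the weight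
`(b - s) ^ (β - 1) / Γ(β)` has mass `ε ^ β / Γ(β + 1)`, and `L` stays bounded since the
trajectories stay in a compact set. As `β > α`, the gain dominates for small `ε`.
-/

open MeasureTheory Set
open scoped RealInnerProductSpace

/-- The trajectory `x(·,u,y)` associated with a Caputo fractional derivative `u`
of order `α` and initial condition `y`. -/
noncomputable def traj (n : ℕ) (a α : ℝ) (u : ℝ → EuclideanSpace ℝ (Fin n))
    (y : EuclideanSpace ℝ (Fin n)) (t : ℝ) : EuclideanSpace ℝ (Fin n) :=
  y + ∫ s in a..t, ((t - s) ^ (α - 1) / Real.Gamma α) • u s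

/-- The Bolza functional. -/
noncomputable def bolza (n : ℕ) (a b α β : ℝ)
    (φ : EuclideanSpace ℝ (Fin n) × EuclideanSpace ℝ (Fin n) → ℝ)
    (L : EuclideanSpace ℝ (Fin n) × EuclideanSpace ℝ (Fin n) × ℝ → ℝ)
    (u : ℝ → EuclideanSpace ℝ (Fin n)) (y : EuclideanSpace ℝ (Fin n)) : ℝ :=
  φ (y, traj n a α u y b) +
    ∫ s in a..b, ((b - s) ^ (β - 1) / Real.Gamma β) * L (traj n a α u y s, u s, s)

/-- Membership in `L^∞([a,b],ℝⁿ)` (a measurable, essentially bounded representative). -/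
def admissible (n : ℕ) (a b : ℝ) (u : ℝ → EuclideanSpace ℝ (Fin n)) : Prop :=
  Measurable u ∧ ∃ C : ℝ, ∀ᵐ s ∂(volume : Measure ℝ), s ∈ Icc a b → ‖u s‖ ≤ C

open Filter Topology

lemma intervalIntegral_eq_of_eqOn_Ioc_zero {V : Type*} [NormedAddCommGroup V] [NormedSpace ℝ V]
    {f : ℝ → V} {a c t : ℝ} (hac : a ≤ c) (hct : c ≤ t) (hf : EqOn f 0 (Ioc a c)) :
    ∫ s in a..t, f s = ∫ s in c..t, f s := by
  rw [intervalIntegral.integral_of_le (hac.trans hct), intervalIntegral.integral_of_le hct]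
  refine setIntegral_eq_of_subset_of_forall_sdiff_eq_zero measurableSet_Ioc
    (Ioc_subset_Ioc_left hac) fun s ⟨hs, hs'⟩ => hf ⟨hs.1, not_lt.1 fun h => hs' ⟨h, hs.2⟩⟩

lemma MeasureTheory.StronglyMeasurable.intervalIntegral_prod_right {V : Type*}
    [NormedAddCommGroup V] [NormedSpace ℝ V] {f : ℝ × ℝ → V} (hf : StronglyMeasurable f) (a : ℝ) :
    StronglyMeasurable fun t => ∫ s in a..t, f (t, s) := by
  have hind : ∀ S : Set (ℝ × ℝ), MeasurableSet S →
      StronglyMeasurable fun t => ∫ s, S.indicator f (t, s) :=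
    fun S hS => (hf.indicator hS).integral_prod_right'
  have h₁ := hind {p | p.2 ∈ Ioc a p.1}
    ((_root_.measurableSet_lt measurable_const measurable_snd).inter
      (_root_.measurableSet_le measurable_snd measurable_fst))
  have h₂ := hind {p | p.2 ∈ Ioc p.1 a}
    ((_root_.measurableSet_lt measurable_fst measurable_snd).inter
      (_root_.measurableSet_le measurable_snd measurable_const))
  convert h₁.sub h₂ using 2 with t
  simp only [intervalIntegral, ← integral_indicator measurableSet_Ioc]
  rfl

lemma tendsto_rpow_nhdsGT_zero {p : ℝ} (hp : 0 < p) :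
    Tendsto (fun x : ℝ => x ^ p) (𝓝[>] 0) (𝓝 0) := by
  simpa [Real.zero_rpow hp.ne'] using
    (Real.continuousAt_rpow_const 0 p (.inr hp.le)).tendsto.mono_left nhdsWithin_le_nhds

lemma tendsto_rpow_div_nhdsGT_zero {p c : ℝ} (hp : 0 < p) (hc : 0 < c) :
    Tendsto (fun x : ℝ => x ^ p / c) (𝓝[>] 0) (𝓝[>] 0) :=
  tendsto_nhdsWithin_of_tendsto_nhds_of_eventually_within _
    (by simpa using (tendsto_rpow_nhdsGT_zero hp).div_const c)
    (by filter_upwards [self_mem_nhdsWithin] with x (hx : 0 < x) using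
      div_pos (Real.rpow_pos_of_pos hx p) hc)

lemma eventually_mul_rpow_lt_mul_rpow {α β : ℝ} (hαβ : α < β) (K : ℝ) {c : ℝ} (hc : 0 < c) :
    ∀ᶠ ε in 𝓝[>] (0 : ℝ), K * ε ^ β < c * ε ^ α := by
  have hsmall : ∀ᶠ ε in 𝓝[>] (0 : ℝ), K * ε ^ (β - α) < c := by
    have := (tendsto_rpow_nhdsGT_zero (sub_pos.2 hαβ)).const_mul K
    rw [mul_zero] at this
    exact this.eventually_lt_const hc
  filter_upwards [hsmall, self_mem_nhdsWithin] with ε hε (hε0 : 0 < ε)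
  calc K * ε ^ β = K * ε ^ (β - α) * ε ^ α := by
        rw [mul_assoc, ← Real.rpow_add hε0, sub_add_cancel]
    _ < c * ε ^ α := mul_lt_mul_of_pos_right hε (Real.rpow_pos_of_pos hε0 α)

lemma HasGradientAt.eventually_lt_add_smul {V : Type*} [NormedAddCommGroup V]
    [InnerProductSpace ℝ V] [CompleteSpace V] {f : V → ℝ} {g x v : V} {c : ℝ}
    (hf : HasGradientAt f g x) (hc : ⟪g, v⟫ < c) :
    ∀ᶠ r in 𝓝[>] (0 : ℝ), f (x + r • v) < f x + c * r := by
  have hline : HasDerivAt (fun r : ℝ => x + r • v) v 0 := by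
    simpa using ((hasDerivAt_id (0 : ℝ)).smul_const v).const_add x
  have hψ : HasDerivAt (fun r : ℝ => f (x + r • v)) ⟪g, v⟫ 0 := by
    have hfx : HasFDerivAt f (InnerProductSpace.toDual ℝ V g) (x + (0 : ℝ) • v) := by
      simpa using hf.hasFDerivAt
    have h := hfx.comp_hasDerivAt 0 hline
    rw [InnerProductSpace.toDual_apply_apply] at h
    exact h
  filter_upwards [hψ.hasDerivWithinAt.limsup_slope_le' (lt_irrefl (0 : ℝ)) hc,
    self_mem_nhdsWithin]
    with r hr (hr0 : 0 < r)
  rw [slope_def_field, sub_zero, div_lt_iff₀ hr0, zero_smul, add_zero] at hr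
  linarith

-- The Riemann–Liouville kernel of order `γ`.
noncomputable def rlKernel (γ t s : ℝ) : ℝ := (t - s) ^ (γ - 1) / Real.Gamma γ

section Kernel

variable {γ : ℝ}

lemma measurable_uncurry_rlKernel : Measurable (Function.uncurry (rlKernel γ)) :=
  ((measurable_fst.sub measurable_snd).pow_const _).div_const _

lemma rlKernel_nonneg (hγ : 0 < γ) {t s : ℝ} (hst : s ≤ t) : 0 ≤ rlKernel γ t s :=
  div_nonneg (Real.rpow_nonneg (sub_nonneg.2 hst) _) (Real.Gamma_pos_of_pos hγ).le

lemma intervalIntegrable_rlKernel (hγ : 0 < γ) (t c d : ℝ) :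
    IntervalIntegrable (rlKernel γ t) volume c d := by
  have h := (intervalIntegral.intervalIntegrable_rpow' (a := t - c) (b := t - d)
    (r := γ - 1) (by linarith)).comp_sub_left t
  simp only [sub_sub_cancel] at h
  exact h.div_const _

lemma integral_rlKernel (hγ : 0 < γ) (c t : ℝ) :
    ∫ s in c..t, rlKernel γ t s = (t - c) ^ γ / Real.Gamma (γ + 1) := by
  simp only [rlKernel, intervalIntegral.integral_div,
    intervalIntegral.integral_comp_sub_left (fun x => x ^ (γ - 1)) t, sub_self,
    integral_rpow (Or.inl (by linarith : -1 < γ - 1)), sub_add_cancel,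
    Real.zero_rpow hγ.ne', Real.Gamma_add_one hγ.ne']
  ring

variable {V : Type*} [NormedAddCommGroup V] [NormedSpace ℝ V]

lemma intervalIntegrable_rlKernel_smul (hγ : 0 < γ) {a t C : ℝ} (hat : a ≤ t) {f : ℝ → V}
    (hfm : AEStronglyMeasurable f (volume.restrict (Ioc a t)))
    (hf : ∀ᵐ s, s ∈ Ioc a t → ‖f s‖ ≤ C) :
    IntervalIntegrable (fun s => rlKernel γ t s • f s) volume a t := by
  rw [intervalIntegrable_iff_integrableOn_Ioc_of_le hat]
  refine Integrable.mono' ((intervalIntegrable_iff_integrableOn_Ioc_of_le hat).1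
    ((intervalIntegrable_rlKernel hγ t a t).mul_const C)) ?_ ?_
  · exact (measurable_uncurry_rlKernel.comp measurable_prodMk_left).aestronglyMeasurable.smul hfm
  · filter_upwards [ae_restrict_of_ae hf, ae_restrict_mem measurableSet_Ioc] with s hs hmem
    rw [norm_smul, Real.norm_of_nonneg (rlKernel_nonneg hγ hmem.2)]
    exact mul_le_mul_of_nonneg_left (hs hmem) (rlKernel_nonneg hγ hmem.2)

lemma norm_integral_rlKernel_smul_le (hγ : 0 < γ) {c t C : ℝ} (hct : c ≤ t) {f : ℝ → V}
    (hf : ∀ᵐ s, s ∈ Ioc c t → ‖f s‖ ≤ C) :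
    ‖∫ s in c..t, rlKernel γ t s • f s‖ ≤ C * ((t - c) ^ γ / Real.Gamma (γ + 1)) := by
  calc ‖∫ s in c..t, rlKernel γ t s • f s‖ ≤ ∫ s in c..t, C * rlKernel γ t s := by
        refine intervalIntegral.norm_integral_le_of_norm_le hct ?_
          ((intervalIntegrable_rlKernel hγ t c t).const_mul C)
        filter_upwards [hf] with s hs hmem
        rw [norm_smul, Real.norm_of_nonneg (rlKernel_nonneg hγ hmem.2), mul_comm]
        exact mul_le_mul_of_nonneg_right (hs hmem) (rlKernel_nonneg hγ hmem.2)
    _ = C * ((t - c) ^ γ / Real.Gamma (γ + 1)) := by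
        rw [intervalIntegral.integral_const_mul, integral_rlKernel hγ]

lemma integral_rlKernel_smul_indicator_Ioi_of_le {a c t : ℝ} (hat : a ≤ t) (htc : t ≤ c)
    (v : V) : ∫ s in a..t, rlKernel γ t s • (Ioi c).indicator (fun _ => v) s = 0 := by
  rw [intervalIntegral_eq_of_eqOn_Ioc_zero hat le_rfl, intervalIntegral.integral_same]
  intro s hs
  simp only [Pi.zero_apply,
    indicator_of_notMem (show s ∉ Ioi c from not_lt.2 (hs.2.trans htc)), smul_zero]

lemma integral_rlKernel_smul_indicator_Ioi [CompleteSpace V] (hγ : 0 < γ) {a c t : ℝ}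
    (hac : a ≤ c) (hct : c ≤ t) (v : V) :
    ∫ s in a..t, rlKernel γ t s • (Ioi c).indicator (fun _ => v) s =
      ((t - c) ^ γ / Real.Gamma (γ + 1)) • v := by
  rw [intervalIntegral_eq_of_eqOn_Ioc_zero hac hct, ← integral_rlKernel hγ,
    ← intervalIntegral.integral_smul_const]
  · refine intervalIntegral.integral_congr_ae (Eventually.of_forall fun s hs => ?_)
    rw [uIoc_of_le hct] at hs
    rw [indicator_of_mem (show s ∈ Ioi c from hs.1)]
  · intro s hs
    simp only [Pi.zero_apply, indicator_of_notMem (show s ∉ Ioi c from not_lt.2 hs.2),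
      smul_zero]

lemma integral_rlKernel_mul_le_add {a c b M : ℝ} (hγ : 0 < γ) (hac : a ≤ c) (hcb : c ≤ b)
    {F G : ℝ → ℝ} (hF : IntervalIntegrable (fun s => rlKernel γ b s * F s) volume a b)
    (hG : IntervalIntegrable (fun s => rlKernel γ b s * G s) volume a b)
    (hFG : EqOn F G (Ioc a c)) (hFM : ∀ᵐ s, s ∈ Ioc c b → |F s| ≤ M)
    (hGM : ∀ᵐ s, s ∈ Ioc c b → |G s| ≤ M) :
    (∫ s in a..b, rlKernel γ b s * F s) ≤
      (∫ s in a..b, rlKernel γ b s * G s) + 2 * M * ((b - c) ^ γ / Real.Gamma (γ + 1)) := by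
  have hdiff : (∫ s in a..b, rlKernel γ b s * F s) - (∫ s in a..b, rlKernel γ b s * G s) =
      ∫ s in c..b, rlKernel γ b s • (F s - G s) := by
    have h := intervalIntegral.integral_sub hF hG
    simp only [← mul_sub] at h
    rw [← h, intervalIntegral_eq_of_eqOn_Ioc_zero hac hcb fun s hs => by simp [hFG hs]]
    rfl
  have hbound : ‖∫ s in c..b, rlKernel γ b s • (F s - G s)‖ ≤
      2 * M * ((b - c) ^ γ / Real.Gamma (γ + 1)) := by
    refine norm_integral_rlKernel_smul_le hγ hcb ?_
    filter_upwards [hFM, hGM] with s hFs hGs hs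
    rw [Real.norm_eq_abs]
    linarith [abs_sub (F s) (G s), hFs hs, hGs hs]
  linarith [(Real.le_norm_self _).trans hbound]

end Kernel

section Bolza

variable {n : ℕ} {a b α : ℝ}

local notation "E" => EuclideanSpace ℝ (Fin n)

lemma traj_eq (u : ℝ → E) (y : E) (t : ℝ) :
    traj n a α u y t = y + ∫ s in a..t, rlKernel α t s • u s := rfl

lemma stronglyMeasurable_traj {u : ℝ → E} (hu : Measurable u) (y : E) :
    StronglyMeasurable (traj n a α u y) :=
  stronglyMeasurable_const.add <| StronglyMeasurable.intervalIntegral_prod_right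
    (f := fun p : ℝ × ℝ => rlKernel α p.1 p.2 • u p.2)
    (measurable_uncurry_rlKernel.smul (hu.comp measurable_snd)).stronglyMeasurable a

lemma norm_traj_le (hα : 0 < α) {u : ℝ → E} {C : ℝ} (hC : ∀ᵐ s, s ∈ Icc a b → ‖u s‖ ≤ C)
    (y : E) {t : ℝ} (ht : t ∈ Icc a b) :
    ‖traj n a α u y t‖ ≤ ‖y‖ + C * ((t - a) ^ α / Real.Gamma (α + 1)) :=
  (norm_add_le _ _).trans <| add_le_add_right (norm_integral_rlKernel_smul_le hα ht.1 <| by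
    filter_upwards [hC] with s hs hmem using hs ⟨hmem.1.le, hmem.2.trans ht.2⟩) _

lemma traj_add {u w : ℝ → E} {t : ℝ}
    (hu : IntervalIntegrable (fun s => rlKernel α t s • u s) volume a t)
    (hw : IntervalIntegrable (fun s => rlKernel α t s • w s) volume a t) (y : E) :
    traj n a α (u + w) y t = traj n a α u y t + ∫ s in a..t, rlKernel α t s • w s := by
  simp only [traj_eq, Pi.add_apply, smul_add, intervalIntegral.integral_add hu hw, add_assoc]

lemma norm_add_indicator_Ioi_le {u : ℝ → E} {C : ℝ} (hC : ∀ᵐ s, s ∈ Icc a b → ‖u s‖ ≤ C)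
    (c : ℝ) (v : E) : ∀ᵐ s, s ∈ Icc a b → ‖(u + (Ioi c).indicator fun _ => v) s‖ ≤ C + ‖v‖ := by
  filter_upwards [hC] with s hs hmem using
    (norm_add_le _ _).trans (add_le_add (hs hmem) (norm_indicator_le_norm_self _ _))

lemma traj_add_indicator_Ioi (hα : 0 < α) {u : ℝ → E} (hu : Measurable u) {C : ℝ}
    (hC : ∀ᵐ s, s ∈ Icc a b → ‖u s‖ ≤ C) (c : ℝ) (v y : E) {t : ℝ} (ht : t ∈ Icc a b) :
    traj n a α (u + (Ioi c).indicator fun _ => v) y t =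
      traj n a α u y t + ∫ s in a..t, rlKernel α t s • (Ioi c).indicator (fun _ => v) s :=
  traj_add (intervalIntegrable_rlKernel_smul hα ht.1 hu.aestronglyMeasurable <| by
      filter_upwards [hC] with s hs hmem using hs ⟨hmem.1.le, hmem.2.trans ht.2⟩)
    (intervalIntegrable_rlKernel_smul hα ht.1
      (measurable_const.indicator measurableSet_Ioi).aestronglyMeasurable
      (Eventually.of_forall fun _ _ => norm_indicator_le_norm_self _ _)) y

variable {β : ℝ} {φ : EuclideanSpace ℝ (Fin n) × EuclideanSpace ℝ (Fin n) → ℝ}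
  {L : EuclideanSpace ℝ (Fin n) × EuclideanSpace ℝ (Fin n) × ℝ → ℝ}

lemma bolza_eq (u : ℝ → E) (y : E) :
    bolza n a b α β φ L u y =
      φ (y, traj n a α u y b) + ∫ s in a..b, rlKernel β b s * L (traj n a α u y s, u s, s) :=
  rfl

lemma exists_bound_lagrangian (hα : 0 < α) (hL : Continuous L) (C : ℝ) (y : E) :
    ∃ M, ∀ w : ℝ → E, (∀ᵐ s, s ∈ Icc a b → ‖w s‖ ≤ C) →
      ∀ᵐ s, s ∈ Icc a b → |L (traj n a α w y s, w s, s)| ≤ M := by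
  have hΓ : 0 < Real.Gamma (α + 1) := Real.Gamma_pos_of_pos (by linarith)
  obtain ⟨M, hM⟩ := ((isCompact_closedBall (0 : E)
    (‖y‖ + |C| * ((b - a) ^ α / Real.Gamma (α + 1)))).prod
      ((isCompact_closedBall (0 : E) C).prod isCompact_Icc)).exists_bound_of_continuousOn
    hL.continuousOn
  refine ⟨M, fun w hw => ?_⟩
  filter_upwards [hw] with s hs hmem
  rw [← Real.norm_eq_abs]
  refine hM _ ⟨?_, ?_, hmem⟩
  · rw [mem_closedBall_zero_iff]
    refine (norm_traj_le hα hw y hmem).trans (add_le_add_right ?_ _)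
    have hrpow : (s - a) ^ α ≤ (b - a) ^ α :=
      Real.rpow_le_rpow (sub_nonneg.2 hmem.1) (by linarith [hmem.2]) hα.le
    exact mul_le_mul (le_abs_self C) (div_le_div_of_nonneg_right hrpow hΓ.le)
      (div_nonneg (Real.rpow_nonneg (sub_nonneg.2 hmem.1) _) hΓ.le) (abs_nonneg C)
  · rw [mem_closedBall_zero_iff]
    exact hs hmem

lemma intervalIntegrable_lagrangian (hβ : 0 < β) (hab : a ≤ b) (hL : Continuous L)
    {u : ℝ → E} (hu : Measurable u) (y : E) {M : ℝ}
    (hM : ∀ᵐ s, s ∈ Icc a b → |L (traj n a α u y s, u s, s)| ≤ M) :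
    IntervalIntegrable (fun s => rlKernel β b s * L (traj n a α u y s, u s, s)) volume a b :=
  intervalIntegrable_rlKernel_smul hβ hab (hL.measurable.comp
      ((stronglyMeasurable_traj hu y).measurable.prodMk
        (hu.prodMk measurable_id))).aestronglyMeasurable
    (by filter_upwards [hM] with s hs hmem using hs (Ioc_subset_Icc_self hmem))

lemma bolza_add_indicator_Ioi_le (hα : 0 < α) (hβ : 0 < β) (hL : Continuous L) {u : ℝ → E}
    (hu : Measurable u) {C M : ℝ} (hC : ∀ᵐ s, s ∈ Icc a b → ‖u s‖ ≤ C) (v y : E)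
    (hM : ∀ w : ℝ → E, (∀ᵐ s, s ∈ Icc a b → ‖w s‖ ≤ C + ‖v‖) →
      ∀ᵐ s, s ∈ Icc a b → |L (traj n a α w y s, w s, s)| ≤ M)
    {c : ℝ} (hac : a ≤ c) (hcb : c ≤ b) :
    bolza n a b α β φ L (u + (Ioi c).indicator fun _ => v) y ≤
      bolza n a b α β φ L u y +
        (φ (y, traj n a α u y b + ((b - c) ^ α / Real.Gamma (α + 1)) • v) -
          φ (y, traj n a α u y b)) + 2 * M * ((b - c) ^ β / Real.Gamma (β + 1)) := by
  set u' := u + (Ioi c).indicator fun _ => v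
  have hu' : Measurable u' := hu.add (measurable_const.indicator measurableSet_Ioi)
  have hM' := hM u' (norm_add_indicator_Ioi_le hC c v)
  have hMu := hM u <| by
    filter_upwards [hC] with s hs hmem using
      (hs hmem).trans (le_add_of_nonneg_right (norm_nonneg v))
  have hend : traj n a α u' y b = traj n a α u y b + ((b - c) ^ α / Real.Gamma (α + 1)) • v := by
    rw [traj_add_indicator_Ioi hα hu hC c v y ⟨hac.trans hcb, le_rfl⟩,
      integral_rlKernel_smul_indicator_Ioi hα hac hcb]
  have hagree : EqOn (fun s => L (traj n a α u' y s, u' s, s))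
      (fun s => L (traj n a α u y s, u s, s)) (Ioc a c) := by
    intro s hs
    have hu's : u' s = u s := by
      simp [u', indicator_of_notMem (show s ∉ Ioi c from not_lt.2 hs.2)]
    have htraj : traj n a α u' y s = traj n a α u y s := by
      rw [traj_add_indicator_Ioi hα hu hC c v y ⟨hs.1.le, hs.2.trans hcb⟩,
        integral_rlKernel_smul_indicator_Ioi_of_le hs.1.le hs.2, add_zero]
    simp only [hu's, htraj]
  have hLint := integral_rlKernel_mul_le_add hβ hac hcb
    (intervalIntegrable_lagrangian hβ (hac.trans hcb) hL hu' y hM')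
    (intervalIntegrable_lagrangian hβ (hac.trans hcb) hL hu y hMu) hagree
    (by filter_upwards [hM'] with s hs hmem using hs ⟨hac.trans hmem.1.le, hmem.2⟩)
    (by filter_upwards [hMu] with s hs hmem using hs ⟨hac.trans hmem.1.le, hmem.2⟩)
  rw [bolza_eq, bolza_eq, hend]
  linarith

end Bolza

theorem stmt_18_general (n : ℕ) (a b : ℝ) (hab : a < b)
    (α β : ℝ) (hα0 : 0 < α) (hβ : α < β)
    (φ : EuclideanSpace ℝ (Fin n) × EuclideanSpace ℝ (Fin n) → ℝ)
    (L : EuclideanSpace ℝ (Fin n) × EuclideanSpace ℝ (Fin n) × ℝ → ℝ)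
    (hφ : ContDiff ℝ 2 φ) (hL : ContDiff ℝ 2 L)
    (hφ2 : ∀ x₁ x₂ : EuclideanSpace ℝ (Fin n), gradient (fun z => φ (x₁, z)) x₂ ≠ 0) :
    ¬ ∃ u : ℝ → EuclideanSpace ℝ (Fin n), ∃ y : EuclideanSpace ℝ (Fin n),
      admissible n a b u ∧
      ∀ u' : ℝ → EuclideanSpace ℝ (Fin n), ∀ y' : EuclideanSpace ℝ (Fin n),
        admissible n a b u' → bolza n a b α β φ L u y ≤ bolza n a b α β φ L u' y' := by
  rintro ⟨u, y, ⟨hu, C, hC⟩, hmin⟩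
  set xb := traj n a α u y b
  set g := gradient (fun z => φ (y, z)) xb
  have hgrad : HasGradientAt (fun z => φ (y, z)) g xb :=
    ((hφ.differentiable (by norm_num)).comp
      ((differentiable_const y).prodMk differentiable_id) xb).hasGradientAt
  have hg : 0 < ‖g‖ := norm_pos_iff.2 (hφ2 y xb)
  have hdescent : ⟪g, -g⟫ < -(‖g‖ ^ 2 / 2) := by
    rw [inner_neg_right, real_inner_self_eq_norm_sq]
    nlinarith
  obtain ⟨M, hM⟩ := exists_bound_lagrangian (b := b) hα0 hL.continuous (C + ‖-g‖) y
  have hΓα : 0 < Real.Gamma (α + 1) := Real.Gamma_pos_of_pos (by linarith)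
  have hMayer := (tendsto_rpow_div_nhdsGT_zero hα0 hΓα).eventually
    (hgrad.eventually_lt_add_smul hdescent)
  have hLagrange := eventually_mul_rpow_lt_mul_rpow hβ (2 * M / Real.Gamma (β + 1))
    (c := ‖g‖ ^ 2 / 2 / Real.Gamma (α + 1)) (by positivity)
  obtain ⟨ε, (hε0 : 0 < ε), hεab, hMayerε, hLagrangeε⟩ := (eventually_mem_nhdsWithin.and
    (((eventually_le_nhds (sub_pos.2 hab)).filter_mono nhdsWithin_le_nhds).and
      (hMayer.and hLagrange))).exists
  have hpert := bolza_add_indicator_Ioi_le hα0 (hα0.trans hβ) hL.continuous hu hC (-g) y hM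
    (c := b - ε) (φ := φ) (by linarith) (by linarith)
  rw [sub_sub_cancel] at hpert
  have hopt := hmin _ y ⟨hu.add (measurable_const.indicator measurableSet_Ioi), C + ‖-g‖,
    norm_add_indicator_Ioi_le hC (b - ε) (-g)⟩
  have hgain : 2 * M * (ε ^ β / Real.Gamma (β + 1)) <
      ‖g‖ ^ 2 / 2 * (ε ^ α / Real.Gamma (α + 1)) := by
    convert hLagrangeε using 1 <;> ring
  linarith

theorem stmt_18 (n : ℕ) (hn : 1 ≤ n) (a b : ℝ) (hab : a < b)
    (α β : ℝ) (hα0 : 0 < α) (hα1 : α < 1) (hβ : α < β)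
    (φ : EuclideanSpace ℝ (Fin n) × EuclideanSpace ℝ (Fin n) → ℝ)
    (L : EuclideanSpace ℝ (Fin n) × EuclideanSpace ℝ (Fin n) × ℝ → ℝ)
    (hφ : ContDiff ℝ 2 φ) (hL : ContDiff ℝ 2 L)
    (hφ2 : ∀ x₁ x₂ : EuclideanSpace ℝ (Fin n), gradient (fun z => φ (x₁, z)) x₂ ≠ 0) :
    ¬ ∃ u : ℝ → EuclideanSpace ℝ (Fin n), ∃ y : EuclideanSpace ℝ (Fin n),
      admissible n a b u ∧
      ∀ u' : ℝ → EuclideanSpace ℝ (Fin n), ∀ y' : EuclideanSpace ℝ (Fin n),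
        admissible n a b u' → bolza n a b α β φ L u y ≤ bolza n a b α β φ L u' y' :=
  stmt_18_general n a b hab α β hα0 hβ φ L hφ hL hφ2
end
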